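/- For every λ ∈ ℂ ∖ {0}, the second cohomology with trivial coefficients of the 4-dimensional complex diamond Lie algebra D_4(λ) vanishes: H^2(D_4(λ), ℂ) = {0}, i.e. b_2(D_4(λ)) = 0. -/

import Mathlib

/-! Chevalley–Eilenberg cohomology with trivial coefficients. -/

section CE

variable (K : Type) [Field K] (g : Type) [LieRing g] [LieAlgebra K g]

/-- The argument vector `(⁅X i, X j⁆, X₀, …, X̂ᵢ, …, X̂ⱼ, …)` used in the
Chevalley–Eilenberg coboundary formula; it is only meaningful when `i < j`. -/
noncomputable def ceArg {m : ℕ} (X : Fin (m + 2) → g) (i j : Fin (m + 2)) : Fin (m + 1) → g :=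
  Fin.cons ⁅X i, X j⁆
    (X ∘ j.succAbove ∘ Fin.succAbove (⟨min i.val m, by omega⟩ : Fin (m + 1)))

/-- The Chevalley–Eilenberg coboundary (trivial coefficients), as a bare function:
`(δ f)(X₀,…,X_k) = Σ_{i<j} (−1)^{i+j} f([Xᵢ,Xⱼ], X₀,…,X̂ᵢ,…,X̂ⱼ,…,X_k)`. -/
noncomputable def ceDeltaFun : ∀ k : ℕ, AlternatingMap K g K (Fin k) → (Fin (k + 1) → g) → K
  | 0, _, _ => 0
  | m + 1, ω, X =>
    ∑ i : Fin (m + 2), ∑ j : Fin (m + 2),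
      (if i < j then (-1 : K) ^ ((i : ℕ) + (j : ℕ)) else 0) • ω (ceArg g X i j)

/-- The Chevalley–Eilenberg coboundary as a linear map into the space of functions. -/
noncomputable def ceDelta (k : ℕ) :
    AlternatingMap K g K (Fin k) →ₗ[K] (Fin (k + 1) → g) → K where
  toFun ω := ceDeltaFun K g k ω
  map_add' ω₁ ω₂ := by
    cases k with
    | zero => funext X; simp [ceDeltaFun]
    | succ m =>
      funext X
      simp only [ceDeltaFun, AlternatingMap.add_apply, smul_add, Finset.sum_add_distrib,
        Pi.add_apply]
  map_smul' c ω := by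
    cases k with
    | zero => funext X; simp [ceDeltaFun]
    | succ m =>
      funext X
      simp only [ceDeltaFun, AlternatingMap.smul_apply, ← smul_comm c, ← Finset.smul_sum,
        RingHom.id_apply, Pi.smul_apply]

/-- Alternating forms, viewed as bare functions (a linear inclusion). -/
noncomputable def ceCoe (k : ℕ) : AlternatingMap K g K (Fin k) →ₗ[K] (Fin k → g) → K where
  toFun ω := ⇑ω
  map_add' := by intros; rfl
  map_smul' := by intros; rfl

/-- The space `Z^k(𝔤, K)` of `k`-cocycles. -/
noncomputable def ceZ (k : ℕ) : Submodule K (AlternatingMap K g K (Fin k)) :=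
  LinearMap.ker (ceDelta K g k)

/-- The space `B^k(𝔤, K)` of `k`-coboundaries. -/
noncomputable def ceB : (k : ℕ) → Submodule K (AlternatingMap K g K (Fin k))
  | 0 => ⊥
  | m + 1 => Submodule.comap (ceCoe K g (m + 1)) (LinearMap.range (ceDelta K g m))

/-- The `k`-th Chevalley–Eilenberg cohomology `H^k(𝔤,K) = Z^k(𝔤,K)/B^k(𝔤,K)`
(with trivial coefficients). -/
noncomputable abbrev ceH (k : ℕ) :=
  @HasQuotient.Quotient (ceZ K g k) (Submodule K (ceZ K g k))
    (@Submodule.hasQuotient K (ceZ K g k) _ _ _) (Submodule.comap (ceZ K g k).subtype (ceB K g k))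

/-- The `k`-th Betti number `b_k(𝔤) = dim H^k(𝔤, K)`. -/
noncomputable def betti (k : ℕ) : ℕ := Module.finrank K (ceH K g k)

end CE

/-- `DiamondBasis n lam g e` says that the basis `e = (X₀,…,Xₙ,Y₀,…,Yₙ)` of the complex
Lie algebra `g` satisfies exactly the bracket relations of the generalized complex diamond
Lie algebra `D_{2n+2}(Λ)`:
`⁅Y₀, Xᵢ⁆ = λᵢ Xᵢ`, `⁅Y₀, Yᵢ⁆ = −λᵢ Yᵢ`, `⁅Xᵢ, Yᵢ⁆ = λᵢ X₀` for `1 ≤ i ≤ n`, all other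
brackets of basis vectors being zero.  Here `Sum.inl i` plays the role of `Xᵢ` and
`Sum.inr i` of `Yᵢ`. -/
def DiamondBasis (n : ℕ) (lam : Fin n → ℂ) (g : Type) [LieRing g] [LieAlgebra ℂ g]
    (e : Module.Basis (Fin (n + 1) ⊕ Fin (n + 1)) ℂ g) : Prop :=
  (∀ i : Fin n, ⁅e (Sum.inr 0), e (Sum.inl i.succ)⁆ = lam i • e (Sum.inl i.succ)) ∧
  (∀ i : Fin n, ⁅e (Sum.inr 0), e (Sum.inr i.succ)⁆ = -(lam i • e (Sum.inr i.succ))) ∧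
  (∀ i : Fin n, ⁅e (Sum.inl i.succ), e (Sum.inr i.succ)⁆ = lam i • e (Sum.inl 0)) ∧
  (∀ u, ⁅e (Sum.inl 0), e u⁆ = 0) ∧
  (∀ i j : Fin n, ⁅e (Sum.inl i.succ), e (Sum.inl j.succ)⁆ = 0) ∧
  (∀ i j : Fin n, ⁅e (Sum.inr i.succ), e (Sum.inr j.succ)⁆ = 0) ∧
  (∀ i j : Fin n, i ≠ j → ⁅e (Sum.inl i.succ), e (Sum.inr j.succ)⁆ = 0)


section Aux

variable {g : Type} [LieRing g] [LieAlgebra ℂ g]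

lemma ceArg01 (X : Fin 3 → g) : ceArg g X 0 1 = ![⁅X 0, X 1⁆, X 2] := by
  funext i; fin_cases i <;> simp [ceArg, Fin.succAbove]

lemma ceArg02 (X : Fin 3 → g) : ceArg g X 0 2 = ![⁅X 0, X 2⁆, X 1] := by
  funext i; fin_cases i <;> simp [ceArg, Fin.succAbove]

lemma ceArg12 (X : Fin 3 → g) : ceArg g X 1 2 = ![⁅X 1, X 2⁆, X 0] := by
  funext i; fin_cases i <;> simp [ceArg, Fin.succAbove]

lemma updZero (a b c : g) : Function.update ![a, b] 0 c = ![c, b] := by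
  funext i; fin_cases i <;> simp

lemma updOne (a b c : g) : Function.update ![a, b] 1 c = ![a, c] := by
  funext i; fin_cases i <;> simp

variable (ω : AlternatingMap ℂ g ℂ (Fin 2))

lemma wAddL (x x' y : g) : ω ![x + x', y] = ω ![x, y] + ω ![x', y] := by
  have h := ω.map_update_add ![x, y] 0 x x'
  rwa [updZero, updZero, updZero] at h

lemma wAddR (x y y' : g) : ω ![x, y + y'] = ω ![x, y] + ω ![x, y'] := by
  have h := ω.map_update_add ![x, y] 1 y y'
  rwa [updOne, updOne, updOne] at h

lemma wSmulL (c : ℂ) (x y : g) : ω ![c • x, y] = c * ω ![x, y] := by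
  have h := ω.map_update_smul ![x, y] 0 c x
  rwa [updZero, updZero, smul_eq_mul] at h

lemma wSmulR (c : ℂ) (x y : g) : ω ![x, c • y] = c * ω ![x, y] := by
  have h := ω.map_update_smul ![x, y] 1 c y
  rwa [updOne, updOne, smul_eq_mul] at h

lemma wSelf (x : g) : ω ![x, x] = 0 :=
  ω.map_eq_zero_of_eq ![x, x] (i := 0) (j := 1) rfl (by decide)

lemma wZeroL (y : g) : ω ![0, y] = 0 :=
  ω.map_coord_zero (i := 0) rfl

lemma wSwap (x y : g) : ω ![y, x] = -ω ![x, y] := by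
  have h : ![y, x] = ![x, y] ∘ Equiv.swap 0 1 := by
    funext i; fin_cases i <;> simp
  rw [h, ω.map_swap _ (by decide)]

lemma delta2_apply (X : Fin 3 → g) :
    ceDeltaFun ℂ g 2 ω X
      = -ω ![⁅X 0, X 1⁆, X 2] + ω ![⁅X 0, X 2⁆, X 1] - ω ![⁅X 1, X 2⁆, X 0] := by
  simp only [ceDeltaFun]
  rw [Fin.sum_univ_three, Fin.sum_univ_three, Fin.sum_univ_three, Fin.sum_univ_three]
  rw [ceArg01, ceArg02, ceArg12]
  norm_num [show ¬ (0:Fin 3) < 0 by decide, show (0:Fin 3) < 1 by decide,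
    show (0:Fin 3) < 2 by decide, show ¬ (1:Fin 3) < 0 by decide,
    show ¬ (1:Fin 3) < 1 by decide, show (1:Fin 3) < 2 by decide,
    show ¬ (2:Fin 3) < 0 by decide, show ¬ (2:Fin 3) < 1 by decide,
    show ¬ (2:Fin 3) < 2 by decide]
  ring

lemma delta1_apply (φ : g →ₗ[ℂ] ℂ) (X : Fin 2 → g) :
    ceDeltaFun ℂ g 1 (AlternatingMap.ofSubsingleton ℂ g ℂ 0 φ) X = -φ ⁅X 0, X 1⁆ := by
  simp only [ceDeltaFun]
  rw [Fin.sum_univ_two, Fin.sum_univ_two, Fin.sum_univ_two]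
  norm_num [show ¬ (0:Fin 2) < 0 by decide, show (0:Fin 2) < 1 by decide,
    show ¬ (1:Fin 2) < 0 by decide, show ¬ (1:Fin 2) < 1 by decide, ceArg]

end Aux

/-- The second cohomology of the complex diamond Lie algebra `D₄(λ)`, `λ ≠ 0`, with
trivial coefficients vanishes: `H²(D₄(λ), ℂ) = 0`, i.e. `b₂(D₄(λ)) = 0`. -/
theorem second_cohomology_diamond_four (lam0 : ℂ) (hlam0 : lam0 ≠ 0) (g : Type)
    [LieRing g] [LieAlgebra ℂ g] (e : Module.Basis (Fin 2 ⊕ Fin 2) ℂ g)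
    (he : DiamondBasis 1 (fun _ => lam0) g e) :
    Subsingleton (ceH ℂ g 2) ∧ betti ℂ g 2 = 0 := by
  obtain ⟨h1, h2, h3, h4, h5, h6, h7⟩ := he
  -- bracket table (before introducing abbreviations)
  have bX0X0 : ⁅e (Sum.inl 0), e (Sum.inl 0)⁆ = 0 := h4 _
  have bX0X1 : ⁅e (Sum.inl 0), e (Sum.inl 1)⁆ = 0 := h4 _
  have bX0Y0 : ⁅e (Sum.inl 0), e (Sum.inr 0)⁆ = 0 := h4 _
  have bX0Y1 : ⁅e (Sum.inl 0), e (Sum.inr 1)⁆ = 0 := h4 _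
  have s01 : (0 : Fin 1).succ = 1 := rfl
  have bY0X1 : ⁅e (Sum.inr 0), e (Sum.inl 1)⁆ = lam0 • e (Sum.inl 1) := by
    simpa [s01] using h1 0
  have bY0Y1 : ⁅e (Sum.inr 0), e (Sum.inr 1)⁆ = (-lam0) • e (Sum.inr 1) := by
    have := h2 0; rw [s01] at this; rw [this]; module
  have bX1Y1 : ⁅e (Sum.inl 1), e (Sum.inr 1)⁆ = lam0 • e (Sum.inl 0) := by
    simpa [s01] using h3 0
  have bX1Y0 : ⁅e (Sum.inl 1), e (Sum.inr 0)⁆ = (-lam0) • e (Sum.inl 1) := by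
    rw [← lie_skew, bY0X1]; module
  have bX1X1 : ⁅e (Sum.inl 1), e (Sum.inl 1)⁆ = 0 := lie_self _
  have bY1Y1 : ⁅e (Sum.inr 1), e (Sum.inr 1)⁆ = 0 := lie_self _
  have bY0Y0 : ⁅e (Sum.inr 0), e (Sum.inr 0)⁆ = 0 := lie_self _
  have bY0X0 : ⁅e (Sum.inr 0), e (Sum.inl 0)⁆ = 0 := by rw [← lie_skew, bX0Y0]; simp
  have bY1X0 : ⁅e (Sum.inr 1), e (Sum.inl 0)⁆ = 0 := by rw [← lie_skew, bX0Y1]; simp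
  have bX1X0 : ⁅e (Sum.inl 1), e (Sum.inl 0)⁆ = 0 := by rw [← lie_skew, bX0X1]; simp
  have bY1X1 : ⁅e (Sum.inr 1), e (Sum.inl 1)⁆ = (-lam0) • e (Sum.inl 0) := by
    rw [← lie_skew, bX1Y1]; module
  have bY1Y0 : ⁅e (Sum.inr 1), e (Sum.inr 0)⁆ = lam0 • e (Sum.inr 1) := by
    rw [← lie_skew, bY0Y1]; module
  set X0 := e (Sum.inl 0) with hX0
  set X1 := e (Sum.inl 1) with hX1
  set Y0 := e (Sum.inr 0) with hY0
  set Y1 := e (Sum.inr 1) with hY1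
  -- every 2-cocycle is a 2-coboundary
  have key : ∀ ω : AlternatingMap ℂ g ℂ (Fin 2), ω ∈ ceZ ℂ g 2 → ω ∈ ceB ℂ g 2 := by
    intro ω hω
    have hδ : ∀ X : Fin 3 → g,
        -ω ![⁅X 0, X 1⁆, X 2] + ω ![⁅X 0, X 2⁆, X 1] - ω ![⁅X 1, X 2⁆, X 0] = 0 := by
      intro X
      rw [← delta2_apply]
      exact congrFun (LinearMap.mem_ker.mp hω) X
    -- cocycle equations
    have ha : ω ![X0, X1] = 0 := by
      have h := hδ ![X0, X1, Y0]
      simp only [Matrix.cons_val_zero, Matrix.cons_val_one, Matrix.head_cons,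
        Matrix.cons_val_two, Matrix.tail_cons] at h
      rw [bX0X1, bX0Y0, bX1Y0, wZeroL, wZeroL, wSmulL, wSwap ω X0 X1] at h
      have hz : lam0 * ω ![X0, X1] = 0 := by
        first | linear_combination h | linear_combination -h
      exact (mul_eq_zero.mp hz).resolve_left hlam0
    have hc : ω ![X0, Y1] = 0 := by
      have h := hδ ![X0, Y0, Y1]
      simp only [Matrix.cons_val_zero, Matrix.cons_val_one, Matrix.head_cons,
        Matrix.cons_val_two, Matrix.tail_cons] at h
      rw [bX0Y0, bX0Y1, bY0Y1, wZeroL, wZeroL, wSmulL, wSwap ω X0 Y1] at h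
      have hz : lam0 * ω ![X0, Y1] = 0 := by
        first | linear_combination h | linear_combination -h
      exact (mul_eq_zero.mp hz).resolve_left hlam0
    have hb : ω ![X0, Y0] = 0 := by
      have h := hδ ![X1, Y0, Y1]
      simp only [Matrix.cons_val_zero, Matrix.cons_val_one, Matrix.head_cons,
        Matrix.cons_val_two, Matrix.tail_cons] at h
      rw [bX1Y0, bX1Y1, bY0Y1, wSmulL, wSmulL, wSmulL, wSwap ω X1 Y1] at h
      have hz : lam0 * ω ![X0, Y0] = 0 := by
        first | linear_combination h | linear_combination -h
      exact (mul_eq_zero.mp hz).resolve_left hlam0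
    -- the primitive
    set v : Fin 2 ⊕ Fin 2 → ℂ :=
      Sum.elim ![-ω ![X1, Y1] / lam0, ω ![X1, Y0] / lam0] ![0, ω ![Y0, Y1] / lam0] with hv
    set φ : g →ₗ[ℂ] ℂ := Module.Basis.constr e ℂ v with hφ
    have φX0 : φ X0 = -ω ![X1, Y1] / lam0 := by
      rw [hφ, hX0, Module.Basis.constr_basis]; rfl
    have φX1 : φ X1 = ω ![X1, Y0] / lam0 := by
      rw [hφ, hX1, Module.Basis.constr_basis]; rfl
    have φY1 : φ Y1 = ω ![Y0, Y1] / lam0 := by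
      rw [hφ, hY1, Module.Basis.constr_basis]; rfl
    -- the bilinear difference vanishes
    have hmain : ∀ x y : g, ω ![x, y] = -φ ⁅x, y⁆ := by
      set D : g →ₗ[ℂ] g →ₗ[ℂ] ℂ := LinearMap.mk₂ ℂ (fun x y => ω ![x, y] + φ ⁅x, y⁆)
        (fun x x' y => by simp only [wAddL, add_lie, map_add]; ring)
        (fun c x y => by simp only [wSmulL, smul_lie, map_smul, smul_eq_mul]; ring)
        (fun x y y' => by simp only [wAddR, lie_add, map_add]; ring)
        (fun c x y => by simp only [wSmulR, lie_smul, map_smul, smul_eq_mul]; ring) with hD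
      have hD0 : D = 0 := by
        apply e.ext; intro i
        apply e.ext; intro j
        have hDij : D (e i) (e j) = ω ![e i, e j] + φ ⁅e i, e j⁆ := rfl
        rcases i with i | i <;> rcases j with j | j <;> fin_cases i <;> fin_cases j <;>
          simp only [Fin.zero_eta, Fin.mk_one] at hDij ⊢ <;>
          simp only [LinearMap.zero_apply] <;> rw [hDij] <;>
          simp only [← hX0, ← hX1, ← hY0, ← hY1]
        · rw [bX0X0, wSelf]; simp
        · rw [bX0X1, ha]; simp
        · rw [bX1X0, wSwap ω X0 X1, ha]; simp
        · rw [bX1X1, wSelf]; simp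
        · rw [bX0Y0, hb]; simp
        · rw [bX0Y1, hc]; simp
        · rw [bX1Y0, map_smul, φX1, smul_eq_mul]
          field_simp
          try ring
        · rw [bX1Y1, map_smul, φX0, smul_eq_mul]
          field_simp
          try ring
        · rw [bY0X0, wSwap ω X0 Y0, hb]; simp
        · rw [bY0X1, map_smul, φX1, smul_eq_mul, wSwap ω X1 Y0]
          field_simp
          try ring
        · rw [bY1X0, wSwap ω X0 Y1, hc]; simp
        · rw [bY1X1, map_smul, φX0, smul_eq_mul, wSwap ω X1 Y1]
          field_simp
          try ring
        · rw [bY0Y0, wSelf]; simp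
        · rw [bY0Y1, map_smul, φY1, smul_eq_mul]
          field_simp
          try ring
        · rw [bY1Y0, map_smul, φY1, smul_eq_mul, wSwap ω Y0 Y1]
          field_simp
          try ring
        · rw [bY1Y1, wSelf]; simp
      intro x y
      have hxy : D x y = 0 := by rw [hD0]; rfl
      have hxy' : ω ![x, y] + φ ⁅x, y⁆ = 0 := hxy
      linear_combination hxy'
    show ω ∈ ceB ℂ g 2
    have hB : ceB ℂ g 2
        = Submodule.comap (ceCoe ℂ g 2) (LinearMap.range (ceDelta ℂ g 1)) := rfl
    rw [hB, Submodule.mem_comap]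
    refine ⟨AlternatingMap.ofSubsingleton ℂ g ℂ 0 φ, ?_⟩
    funext X
    have hXeq : X = ![X 0, X 1] := by funext i; fin_cases i <;> rfl
    show ceDeltaFun ℂ g 1 (AlternatingMap.ofSubsingleton ℂ g ℂ 0 φ) X = ω X
    rw [delta1_apply]
    conv_rhs => rw [hXeq]
    exact (hmain (X 0) (X 1)).symm
  have htop : Submodule.comap (ceZ ℂ g 2).subtype (ceB ℂ g 2) = ⊤ := by
    rw [Submodule.eq_top_iff']
    intro x
    rw [Submodule.mem_comap, Submodule.coe_subtype]
    exact key x x.2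
  have hsub : Subsingleton (ceH ℂ g 2) :=
    Submodule.Quotient.subsingleton_iff.mpr htop
  refine ⟨hsub, ?_⟩
  haveI := hsub
  exact Module.finrank_zero_of_subsingleton
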